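/- For each fixed k, let f_k(z) = y_k(1,z⁴)·ω₁(z), where y_k(t,z⁴) is the solution of the scalar fourth-order problem normalized so that the first boundary-coefficient relation holds, and let z_{k,j} be the positive characteristic roots (so λ_{k,j} = z⁴_{k,j} + γ_k are the eigenvalues). Then the derivative of f_k at z_{k,j} equals f'_k(z_{k,j}) = 4 z³_{k,j} ‖Ψ_{k,j}‖²_Λ = 4 z³_{k,j} / c²_{k,j}, where ‖Ψ_{k,j}‖²_Λ is the squared norm of the corresponding eigenvector and c²_{k,j} are the norming constants. -/

import Mathlib

/-!
Since `ω₁(z₀) = 0`, the product rule gives `f'(z₀) = y(1) ω₁'(z₀)`, and since `ω₂ ≡ 0` one may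
subtract `y'(1) ω₂'(z₀) = 0`. Along `z ↦ (c₁(z), c₂(z), z)` the derivative of each `ωᵢ`, which is
linear in `(c₁, c₂)`, is `ωᵢ` evaluated at `(c₁', c₂')` plus its partial derivative in `z`. The
terms in `c₁', c₂'` cancel by the Lagrange identity
`v(1) ω₁(u) - v'(1) ω₂(u) = u(1) ω₁(v) - u'(1) ω₂(v)` for two solutions with the same `z`, together
with the boundary conditions at `z₀`. What remains, `y(1) ∂_z ω₁ - y'(1) ∂_z ω₂`, reduces by the
boundary conditions to the `λ`-derivative of the Lagrange form, which is `4 z₀³ ∫₀¹ y²`, plus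
`4 z₀³ γ_k^α (y(1)² + y'(1)²)`.
-/

noncomputable section
open MeasureTheory Filter
open scoped Topology

namespace FourthOrderPaper

namespace Scalar

/-- `y_k(t, z⁴) = c₁ sinh(zt) + c₂ sin(zt)`: the solution of the scalar equation
`y⁗ + γ_k y = (z⁴ + γ_k) y` satisfying `y(0) = y''(0) = 0`. -/
def sol (c₁ c₂ z t : ℝ) : ℝ := c₁ * Real.sinh (z * t) + c₂ * Real.sin (z * t)

/-- `y_k'(t, z⁴)`. -/
def sol' (c₁ c₂ z t : ℝ) : ℝ := c₁ * z * Real.cosh (z * t) + c₂ * z * Real.cos (z * t)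

/-- `y_k''(t, z⁴)`. -/
def sol'' (c₁ c₂ z t : ℝ) : ℝ :=
  c₁ * z ^ 2 * Real.sinh (z * t) - c₂ * z ^ 2 * Real.sin (z * t)

/-- `y_k'''(t, z⁴)`. -/
def sol''' (c₁ c₂ z t : ℝ) : ℝ :=
  c₁ * z ^ 3 * Real.cosh (z * t) - c₂ * z ^ 3 * Real.cos (z * t)

/-- `ω₁(z) = y_k'''(1, z⁴) + (z⁴ + γ_k) γ_k^α y_k(1, z⁴)`. -/
def omega1 (γk αe c₁ c₂ z : ℝ) : ℝ :=
  sol''' c₁ c₂ z 1 + (z ^ 4 + γk) * γk ^ αe * sol c₁ c₂ z 1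

/-- `ω₂(z) = y_k''(1, z⁴) − (z⁴ + γ_k) γ_k^α y_k'(1, z⁴)`. -/
def omega2 (γk αe c₁ c₂ z : ℝ) : ℝ :=
  sol'' c₁ c₂ z 1 - (z ^ 4 + γk) * γk ^ αe * sol' c₁ c₂ z 1

/-- The squared norm `‖Ψ‖²_Λ` in `Λ = L₂(0,1) ⊕ ℂ²`:
`∫₀¹ y² dt + γ_k^α y(1)² + γ_k^α y'(1)²`. -/
def normSq (γk αe c₁ c₂ z : ℝ) : ℝ :=
  (∫ t in (0:ℝ)..1, (sol c₁ c₂ z t) ^ 2) + γk ^ αe * (sol c₁ c₂ z 1) ^ 2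
    + γk ^ αe * (sol' c₁ c₂ z 1) ^ 2

variable {γk αe : ℝ}

-- `∂ω₁/∂z` and `∂ω₂/∂z` with `c₁`, `c₂` held fixed.
def omega1Dz (γk αe c₁ c₂ z : ℝ) : ℝ :=
  c₁ * (3 * z ^ 2 * Real.cosh z + z ^ 3 * Real.sinh z)
    - c₂ * (3 * z ^ 2 * Real.cos z - z ^ 3 * Real.sin z)
    + 4 * z ^ 3 * γk ^ αe * sol c₁ c₂ z 1
    + (z ^ 4 + γk) * γk ^ αe * (c₁ * Real.cosh z + c₂ * Real.cos z)

def omega2Dz (γk αe c₁ c₂ z : ℝ) : ℝ :=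
  c₁ * (2 * z * Real.sinh z + z ^ 2 * Real.cosh z)
    - c₂ * (2 * z * Real.sin z + z ^ 2 * Real.cos z)
    - 4 * z ^ 3 * γk ^ αe * sol' c₁ c₂ z 1
    - (z ^ 4 + γk) * γk ^ αe
      * (c₁ * (Real.cosh z + z * Real.sinh z) + c₂ * (Real.cos z - z * Real.sin z))

theorem hasDerivAt_omega1 {c₁ c₂ : ℝ → ℝ} {d₁ d₂ z : ℝ} (h₁ : HasDerivAt c₁ d₁ z)
    (h₂ : HasDerivAt c₂ d₂ z) :
    HasDerivAt (fun z => omega1 γk αe (c₁ z) (c₂ z) z)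
      (omega1 γk αe d₁ d₂ z + omega1Dz γk αe (c₁ z) (c₂ z) z) z := by
  have hsol := (h₁.mul (Real.hasDerivAt_sinh z)).add (h₂.mul (Real.hasDerivAt_sin z))
  have h := (((h₁.mul (hasDerivAt_pow 3 z)).mul (Real.hasDerivAt_cosh z)).sub
    ((h₂.mul (hasDerivAt_pow 3 z)).mul (Real.hasDerivAt_cos z))).add
    ((((hasDerivAt_pow 4 z).add_const γk).mul_const (γk ^ αe)).mul hsol)
  simp only [omega1, omega1Dz, sol''', sol, mul_one]
  exact h.congr_deriv (by simp only [Pi.mul_apply, Pi.add_apply]; push_cast; ring)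

theorem hasDerivAt_omega2 {c₁ c₂ : ℝ → ℝ} {d₁ d₂ z : ℝ} (h₁ : HasDerivAt c₁ d₁ z)
    (h₂ : HasDerivAt c₂ d₂ z) :
    HasDerivAt (fun z => omega2 γk αe (c₁ z) (c₂ z) z)
      (omega2 γk αe d₁ d₂ z + omega2Dz γk αe (c₁ z) (c₂ z) z) z := by
  have hsol' := ((h₁.mul (hasDerivAt_id z)).mul (Real.hasDerivAt_cosh z)).add
    ((h₂.mul (hasDerivAt_id z)).mul (Real.hasDerivAt_cos z))
  have h := (((h₁.mul (hasDerivAt_pow 2 z)).mul (Real.hasDerivAt_sinh z)).sub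
    ((h₂.mul (hasDerivAt_pow 2 z)).mul (Real.hasDerivAt_sin z))).sub
    ((((hasDerivAt_pow 4 z).add_const γk).mul_const (γk ^ αe)).mul hsol')
  simp only [omega2, omega2Dz, sol'', sol', mul_one]
  exact h.congr_deriv (by simp only [Pi.mul_apply, Pi.add_apply, id]; push_cast; ring)

theorem sol_mul_omega1_sub_sol'_mul_omega2_comm (a b a' b' z : ℝ) :
    sol a b z 1 * omega1 γk αe a' b' z - sol' a b z 1 * omega2 γk αe a' b' z
      = sol a' b' z 1 * omega1 γk αe a b z - sol' a' b' z 1 * omega2 γk αe a b z := by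
  simp only [omega1, omega2, sol, sol', sol'', sol''']
  ring

theorem two_mul_integral_sol_sq (a b z : ℝ) :
    2 * z * ∫ t in (0:ℝ)..1, sol a b z t ^ 2
      = a ^ 2 * (Real.sinh z * Real.cosh z - z) + b ^ 2 * (z - Real.sin z * Real.cos z)
        + 2 * a * b * (Real.cosh z * Real.sin z - Real.sinh z * Real.cos z) := by
  set F : ℝ → ℝ := fun x => a ^ 2 * (Real.sinh x * Real.cosh x - x)
    + b ^ 2 * (x - Real.sin x * Real.cos x)
    + 2 * a * b * (Real.cosh x * Real.sin x - Real.sinh x * Real.cos x)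
  have hF : ∀ x, HasDerivAt F (2 * sol a b 1 x ^ 2) x := by
    intro x
    have hsc := ((Real.hasDerivAt_sinh x).mul (Real.hasDerivAt_cosh x)).sub (hasDerivAt_id x)
    have hsn := (hasDerivAt_id x).sub ((Real.hasDerivAt_sin x).mul (Real.hasDerivAt_cos x))
    have hmix := ((Real.hasDerivAt_cosh x).mul (Real.hasDerivAt_sin x)).sub
      ((Real.hasDerivAt_sinh x).mul (Real.hasDerivAt_cos x))
    have h := ((hsc.const_mul (a ^ 2)).add (hsn.const_mul (b ^ 2))).add (hmix.const_mul (2 * a * b))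
    refine h.congr_deriv ?_
    simp only [sol, one_mul]
    linear_combination a ^ 2 * Real.cosh_sq x - b ^ 2 * Real.sin_sq_add_cos_sq x
  have hFz : ∀ t ∈ Set.uIcc (0:ℝ) 1,
      HasDerivAt (fun t => F (z * t)) (2 * z * sol a b z t ^ 2) t := by
    intro t _
    refine ((hF (z * t)).comp t ((hasDerivAt_id t).const_mul z)).congr_deriv ?_
    simp only [sol, one_mul, mul_one]; ring
  have hint : IntervalIntegrable (fun t => 2 * z * sol a b z t ^ 2) volume 0 1 := by
    unfold sol; exact Continuous.intervalIntegrable (by fun_prop) _ _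
  rw [← intervalIntegral.integral_const_mul, intervalIntegral.integral_eq_sub_of_hasDerivAt hFz hint]
  simp [F]

theorem sol_mul_omega1Dz_sub_sol'_mul_omega2Dz {a b z : ℝ} (h₁ : omega1 γk αe a b z = 0)
    (h₂ : omega2 γk αe a b z = 0) :
    sol a b z 1 * omega1Dz γk αe a b z - sol' a b z 1 * omega2Dz γk αe a b z
      = 4 * z ^ 3 * normSq γk αe a b z := by
  -- The boundary conditions trade `(z⁴ + γ_k) γ_k^α y(1)` and `(z⁴ + γ_k) γ_k^α y'(1)`
  -- for `-y'''(1)` and `y''(1)`.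
  have hI := two_mul_integral_sol_sq a b z
  simp only [omega1, omega2, omega1Dz, omega2Dz, normSq, sol, sol', sol'', sol''', mul_one] at *
  linear_combination (a * Real.cosh z + b * Real.cos z) * h₁
    - (a * (Real.cosh z + z * Real.sinh z) + b * (Real.cos z - z * Real.sin z)) * h₂
    - 2 * z ^ 2 * hI - 2 * a ^ 2 * z ^ 3 * Real.cosh_sq z
    + 2 * b ^ 2 * z ^ 3 * Real.sin_sq_add_cos_sq z

theorem deriv_sol_mul_omega1 {c₁ c₂ : ℝ → ℝ} {z₀ : ℝ} (hc₁ : DifferentiableAt ℝ c₁ z₀)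
    (hc₂ : DifferentiableAt ℝ c₂ z₀) (h₂ : ∀ᶠ z in 𝓝 z₀, omega2 γk αe (c₁ z) (c₂ z) z = 0)
    (h₁ : omega1 γk αe (c₁ z₀) (c₂ z₀) z₀ = 0) :
    deriv (fun z => sol (c₁ z) (c₂ z) z 1 * omega1 γk αe (c₁ z) (c₂ z) z) z₀
      = 4 * z₀ ^ 3 * normSq γk αe (c₁ z₀) (c₂ z₀) z₀ := by
  set a := c₁ z₀
  set b := c₂ z₀
  set d₁ := deriv c₁ z₀
  set d₂ := deriv c₂ z₀
  have hY : DifferentiableAt ℝ (fun z => sol (c₁ z) (c₂ z) z 1) z₀ := by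
    unfold sol; fun_prop
  have hω₁ := hasDerivAt_omega1 (γk := γk) (αe := αe) hc₁.hasDerivAt hc₂.hasDerivAt
  have hω₂ : omega2 γk αe d₁ d₂ z₀ + omega2Dz γk αe a b z₀ = 0 :=
    (hasDerivAt_omega2 hc₁.hasDerivAt hc₂.hasDerivAt).unique
      ((hasDerivAt_const z₀ 0).congr_of_eventuallyEq h₂)
  calc _ = sol a b z₀ 1 * (omega1 γk αe d₁ d₂ z₀ + omega1Dz γk αe a b z₀) := by
        rw [(hY.hasDerivAt.fun_mul hω₁).deriv, h₁, mul_zero, zero_add]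
    _ = sol a b z₀ 1 * (omega1 γk αe d₁ d₂ z₀ + omega1Dz γk αe a b z₀)
        - sol' a b z₀ 1 * (omega2 γk αe d₁ d₂ z₀ + omega2Dz γk αe a b z₀) := by
        rw [hω₂, mul_zero, sub_zero]
    _ = (sol d₁ d₂ z₀ 1 * omega1 γk αe a b z₀ - sol' d₁ d₂ z₀ 1 * omega2 γk αe a b z₀)
        + (sol a b z₀ 1 * omega1Dz γk αe a b z₀ - sol' a b z₀ 1 * omega2Dz γk αe a b z₀) := by
        rw [← sol_mul_omega1_sub_sol'_mul_omega2_comm]; ring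
    _ = _ := by
        rw [h₁, h₂.self_of_nhds, sol_mul_omega1Dz_sub_sol'_mul_omega2Dz h₁ h₂.self_of_nhds]; ring

end Scalar

theorem statement11_general (γk αe : ℝ)
    (c₁ c₂ : ℝ → ℝ) (hc₁ : Differentiable ℝ c₁) (hc₂ : Differentiable ℝ c₂)
    (hnorm : ∀ z, Scalar.omega2 γk αe (c₁ z) (c₂ z) z = 0)
    (z₀ : ℝ)
    (hroot : Scalar.omega1 γk αe (c₁ z₀) (c₂ z₀) z₀ = 0) :
    deriv (fun z => Scalar.sol (c₁ z) (c₂ z) z 1 * Scalar.omega1 γk αe (c₁ z) (c₂ z) z) z₀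
      = 4 * z₀ ^ 3 * Scalar.normSq γk αe (c₁ z₀) (c₂ z₀) z₀ ∧
    ∀ c : ℝ, c ^ 2 * Scalar.normSq γk αe (c₁ z₀) (c₂ z₀) z₀ = 1 →
      deriv (fun z => Scalar.sol (c₁ z) (c₂ z) z 1 * Scalar.omega1 γk αe (c₁ z) (c₂ z) z) z₀
        = 4 * z₀ ^ 3 / c ^ 2 := by
  have hderiv := Scalar.deriv_sol_mul_omega1 (hc₁ z₀) (hc₂ z₀) (.of_forall hnorm) hroot
  refine ⟨hderiv, fun c hc => ?_⟩
  rw [hderiv, eq_div_iff (left_ne_zero_of_mul_eq_one hc)]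
  linear_combination 4 * z₀ ^ 3 * hc

/-- Theorem 5.1.  For fixed `k`, let
`f_k(z) = y_k(1,z⁴)·ω₁(z)` where `y_k(t,z⁴) = c₁(z) sinh(zt) + c₂(z) sin(zt)` is
the solution of the scalar fourth-order problem normalized so that the
boundary-coefficient relation `ω₂(z) = 0` holds, and let `z₀ = z_{k,j} > 0` be a
characteristic root (common zero of `ω₁` and `ω₂`, so that
`λ_{k,j} = z₀⁴ + γ_k` is an eigenvalue).  Then
`f_k'(z_{k,j}) = 4 z³_{k,j} ‖Ψ_{k,j}‖²_Λ = 4 z³_{k,j} / c²_{k,j}`. -/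
theorem statement11 (γk αe : ℝ) (hγ : 1 < γk) (hα : 0 < αe ∧ αe < 1/2)
    (c₁ c₂ : ℝ → ℝ) (hc₁ : Differentiable ℝ c₁) (hc₂ : Differentiable ℝ c₂)
    (hnorm : ∀ z, Scalar.omega2 γk αe (c₁ z) (c₂ z) z = 0)
    (z₀ : ℝ) (hz₀ : 0 < z₀)
    (hroot : Scalar.omega1 γk αe (c₁ z₀) (c₂ z₀) z₀ = 0) :
    deriv (fun z => Scalar.sol (c₁ z) (c₂ z) z 1 * Scalar.omega1 γk αe (c₁ z) (c₂ z) z) z₀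
      = 4 * z₀ ^ 3 * Scalar.normSq γk αe (c₁ z₀) (c₂ z₀) z₀ ∧
    ∀ c : ℝ, c ^ 2 * Scalar.normSq γk αe (c₁ z₀) (c₂ z₀) z₀ = 1 →
      deriv (fun z => Scalar.sol (c₁ z) (c₂ z) z 1 * Scalar.omega1 γk αe (c₁ z) (c₂ z) z) z₀
        = 4 * z₀ ^ 3 / c ^ 2 :=
  statement11_general γk αe c₁ c₂ hc₁ hc₂ hnorm z₀ hroot

end FourthOrderPaper
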